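/- Let t ≥ 2 be an integer, let m be an even integer with m ≥ 4(t+3)+2, let n be an integer with (t−1)(m−1) ≤ n−1 < t(m−1), and suppose p = ⌊(n−1)/t⌋ = m−2. Then R(C_m, B_n^{(3)}) ≥ n + 3p + 1; in fact, writing q = n − 1 − tp, the graph consisting of q pairwise disjoint copies of K_{p+1} together with t+3−q further copies of K_{p+1} all sharing one common vertex contains no cycle of length m and its complement contains no B_n^{(3)}. -/

import Mathlib

/-- `G` contains a cycle of length `m`. -/
def HasCycleLen {V : Type*} (G : SimpleGraph V) (m : ℕ) : Prop :=
  ∃ (v : V) (c : G.Walk v v), c.IsCycle ∧ c.length = m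

/-- `G` contains the book `B_n^{(k)}`: a clique on `k` vertices together with
`n` further vertices each adjacent to all of them. -/
def HasBook {V : Type*} (G : SimpleGraph V) (k n : ℕ) : Prop :=
  ∃ S T : Finset V, S.card = k ∧ T.card = n ∧ Disjoint S T ∧
    (∀ u ∈ S, ∀ v ∈ S, u ≠ v → G.Adj u v) ∧
    (∀ u ∈ S, ∀ v ∈ T, G.Adj u v)

/-- Every simple graph on `N` vertices contains `C_m` or its complement contains
`B_n^{(k)}`. The Ramsey number `R(C_m, B_n^{(k)})` is the least such `N`. -/
def RamseyProp (m k n N : ℕ) : Prop :=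
  ∀ G : SimpleGraph (Fin N), HasCycleLen G m ∨ HasBook Gᶜ k n

/-- The graph consisting of `q` pairwise disjoint copies of `K_{p+1}` together with
`c` further copies of `K_{p+1}` all sharing one common vertex.  The disjoint copies
live on `Fin q × Fin (p+1)`; the shared cluster lives on `Option (Fin c × Fin p)`,
where `none` is the common vertex of the `c` copies of `K_{p+1}`. -/
def disjointCliquesPlusCluster (q c p : ℕ) :
    SimpleGraph ((Fin q × Fin (p + 1)) ⊕ Option (Fin c × Fin p)) :=
  SimpleGraph.fromRel fun u v =>
    match u, v with
    | Sum.inl a, Sum.inl b => a.1 = b.1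
    | Sum.inr a, Sum.inr b => a = none ∨ a.map Prod.fst = b.map Prod.fst
    | _, _ => False

/-!
Deleting the common vertex `z` of the graph leaves disjoint cliques `K_{p+1}` and `K_p`. A cycle
avoiding `z` lies in one of them; a cycle through `z` is `z` followed by a path inside one `K_p`.
Either way it has at most `p + 1 < m` vertices.

Every vertex lies in a `K_{p+1}`, so has degree at least `p`, and two non-adjacent vertices have no
common neighbour other than `z`. Hence the closed neighbourhoods of the three spine vertices of a
book in the complement cover at least `3 (p + 1) - 2` vertices, none of which can be a page. As
the graph has `n + 3p` vertices, at most `n - 1` pages remain.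
-/

open Finset SimpleGraph

section General

variable {V W : Type*}

theorem HasCycleLen.map {G : SimpleGraph V} {H : SimpleGraph W} {m : ℕ} (f : G →g H)
    (hf : Function.Injective f) : HasCycleLen G m → HasCycleLen H m := by
  rintro ⟨v, c, hc, rfl⟩
  exact ⟨f v, c.map f, hc.map hf, c.length_map f⟩

theorem HasBook.map {G : SimpleGraph V} {H : SimpleGraph W} {k n : ℕ} (f : G →g H)
    (hf : Function.Injective f) : HasBook G k n → HasBook H k n := by
  rintro ⟨S, T, hS, hT, hST, hSS, hSTadj⟩
  refine ⟨S.map ⟨f, hf⟩, T.map ⟨f, hf⟩, by simpa, by simpa, by simpa, ?_, ?_⟩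
  · simp only [mem_map, Function.Embedding.coeFn_mk]
    rintro _ ⟨u, hu, rfl⟩ _ ⟨v, hv, rfl⟩ huv
    exact f.map_adj (hSS u hu v hv (ne_of_apply_ne f huv))
  · simp only [mem_map, Function.Embedding.coeFn_mk]
    rintro _ ⟨u, hu, rfl⟩ _ ⟨v, hv, rfl⟩
    exact f.map_adj (hSTadj u hu v hv)

theorem card_lt_of_ramseyProp [Fintype W] {G : SimpleGraph W} {m k n N : ℕ}
    (hC : ¬HasCycleLen G m) (hB : ¬HasBook Gᶜ k n) (hR : RamseyProp m k n N) :
    Fintype.card W < N := by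
  by_contra! hN
  obtain ⟨f⟩ := Function.Embedding.nonempty_of_card_le (α := Fin N) (by simpa using hN)
  let e := Embedding.comap f G
  rcases hR (G.comap f) with h | h
  · exact hC (h.map e.toHom e.injective)
  · exact hB (h.map (Embedding.complEquiv e).toHom (Embedding.complEquiv e).injective)

theorem Finset.sum_card_le_card_biUnion_add {ι α : Type*} [DecidableEq ι] [DecidableEq α]
    {s : Finset ι} {A : ι → Finset α} {z : α}
    (h : ∀ i ∈ s, ∀ j ∈ s, i ≠ j → A i ∩ A j ⊆ {z}) :
    ∑ i ∈ s, #(A i) ≤ #(s.biUnion A) + (#s - 1) := by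
  induction s using Finset.induction_on with
  | empty => simp
  | insert a s ha ih =>
    rcases s.eq_empty_or_nonempty with rfl | hs
    · simp
    have hinter : #(A a ∩ s.biUnion A) ≤ 1 := by
      refine (card_le_card ?_).trans (card_singleton z).le
      rw [inter_biUnion]
      exact biUnion_subset.2 fun j hj =>
        h a (mem_insert_self a s) j (mem_insert_of_mem hj) (ne_of_mem_of_not_mem hj ha).symm
    have := ih fun i hi j hj => h i (mem_insert_of_mem hi) j (mem_insert_of_mem hj)
    have := card_union_add_card_inter (A a) (s.biUnion A)
    rw [sum_insert ha, biUnion_insert, card_insert_of_notMem ha]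
    have := hs.card_pos
    omega

theorem SimpleGraph.IsClique.card_le_degree_add_one [Fintype V] [DecidableEq V]
    {G : SimpleGraph V} [DecidableRel G.Adj] {s : Finset V} (hs : G.IsClique (s : Set V))
    {u : V} (hu : u ∈ s) : #s ≤ G.degree u + 1 := by
  rw [← card_neighborFinset_eq_degree, ← card_erase_add_one hu]
  gcongr
  intro x hx
  rw [mem_neighborFinset]
  exact hs hu (mem_erase.1 hx).2 (mem_erase.1 hx).1.symm

theorem le_card_of_hasBook_compl [Fintype V] [DecidableEq V] {G : SimpleGraph V}
    [DecidableRel G.Adj] {z : V} {d k n : ℕ} (hdeg : ∀ u, d ≤ G.degree u)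
    (hcommon : ∀ u v, u ≠ v → ¬G.Adj u v → G.neighborFinset u ∩ G.neighborFinset v ⊆ {z})
    (h : HasBook Gᶜ k n) : n + k * (d + 1) ≤ Fintype.card V + (k - 1) := by
  obtain ⟨S, T, rfl, rfl, -, hS, hST⟩ := h
  set N : V → Finset V := fun u => insert u (G.neighborFinset u)
  have hN : ∀ u, d + 1 ≤ #(N u) := fun u => by
    simpa [N, card_insert_of_notMem, ← card_neighborFinset_eq_degree] using hdeg u
  have hNN : ∀ u ∈ S, ∀ v ∈ S, u ≠ v → N u ∩ N v ⊆ {z} := by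
    intro u hu v hv huv x hx
    have huv' := ((compl_adj G u v).1 (hS u hu v hv huv)).2
    simp only [N, mem_inter, mem_insert, mem_neighborFinset] at hx
    rcases hx with ⟨rfl | hux, rfl | hvx⟩
    · exact absurd rfl huv
    · exact absurd hvx.symm huv'
    · exact absurd hux huv'
    · exact hcommon u v huv huv' (by simp [hux, hvx])
  have hTN : Disjoint T (S.biUnion N) := by
    refine disjoint_left.2 fun v hv hvN => ?_
    obtain ⟨u, hu, hvu⟩ := mem_biUnion.1 hvN
    have := (compl_adj G u v).1 (hST u hu v hv)
    simp only [N, mem_insert, mem_neighborFinset] at hvu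
    rcases hvu with rfl | h
    · exact this.1 rfl
    · exact this.2 h
  calc #T + #S * (d + 1) ≤ #T + ∑ u ∈ S, #(N u) := by
        simpa [mul_comm] using sum_le_sum fun u _ => hN u
    _ ≤ #T + #(S.biUnion N) + (#S - 1) := by
        have := sum_card_le_card_biUnion_add hNN
        omega
    _ = #(T ∪ S.biUnion N) + (#S - 1) := by rw [card_union_of_disjoint hTN]
    _ ≤ Fintype.card V + (#S - 1) := by grw [card_le_univ]

end General

namespace SimpleGraph.Walk

variable {V ι : Type*} {G : SimpleGraph V} {κ : V → ι} {z : V}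

theorem apply_eq_of_notMem_support (hκ : ∀ u v, G.Adj u v → u ≠ z → v ≠ z → κ u = κ v)
    {u v : V} (w : G.Walk u v) (hz : z ∉ w.support) {x : V} (hx : x ∈ w.support) :
    κ x = κ u := by
  induction w with
  | nil => simp_all
  | @cons u u' _ h w ih =>
    simp only [support_cons, List.mem_cons, not_or] at hz hx
    rcases hx with rfl | hx
    · rfl
    · rw [ih hz.2 hx]
      exact (hκ u u' h (Ne.symm hz.1) (fun h' => hz.2 (h' ▸ w.start_mem_support))).symm

theorem IsCycle.length_le_card [Fintype V] [DecidableEq V] {u : V} {c : G.Walk u u}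
    (hc : c.IsCycle) {s : Finset V} (hs : ∀ x ∈ c.support, x ∈ s) : c.length ≤ #s :=
  calc c.length = #c.support.tail.toFinset := by
        rw [List.toFinset_card_of_nodup hc.support_nodup, List.length_tail, length_support]; rfl
    _ ≤ #s := card_le_card fun x hx => hs x (List.mem_of_mem_tail (List.mem_toFinset.1 hx))

theorem IsCycle.length_le_of_card_fiber_le [Fintype V] [DecidableEq V] [DecidableEq ι]
    (hκ : ∀ u v, G.Adj u v → u ≠ z → v ≠ z → κ u = κ v) {L : ℕ}
    (hfiber : ∀ i, #{x | κ x = i} ≤ L)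
    (hhub : ∀ y, G.Adj z y → #(insert z ({x | κ x = κ y} : Finset V)) ≤ L)
    {u : V} {c : G.Walk u u} (hc : c.IsCycle) : c.length ≤ L := by
  by_cases hz : z ∈ c.support
  · -- Rotated to start at `z`, the cycle is an edge `z y` followed by a path `rest` back to `z`
    -- that meets `z` only at its end, so `rest` minus its endpoint lies in the fiber of `y`.
    rw [← c.length_rotate z hz]
    obtain ⟨y, hy, rest, hrest⟩ := not_nil_iff.1 (hc.rotate hz).not_nil
    refine ((hc.rotate hz).length_le_card ?_).trans (hhub y hy)
    have hpath := ((cons_isCycle_iff rest hy).1 (hrest ▸ hc.rotate hz)).1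
    have hrest_ne : ¬rest.Nil := fun h => hy.ne (h.eq ▸ rfl)
    have hz' : z ∉ rest.dropLast.support := by
      have := hpath.support_nodup
      rw [← support_dropLast_concat hrest_ne, List.nodup_append] at this
      exact fun hz => this.2.2 z hz z (List.mem_singleton_self z) rfl
    intro x hx
    rw [hrest, support_cons, List.mem_cons, ← support_dropLast_concat hrest_ne] at hx
    simp only [List.mem_append, List.mem_singleton] at hx
    rcases hx with rfl | hx | rfl
    · exact mem_insert_self _ _
    · exact mem_insert_of_mem (by simpa using apply_eq_of_notMem_support hκ _ hz' hx)
    · exact mem_insert_self _ _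
  · refine (hc.length_le_card fun x hx => ?_).trans (hfiber (κ u))
    simpa using apply_eq_of_notMem_support hκ c hz hx

end SimpleGraph.Walk

namespace disjointCliquesPlusCluster

variable {q c p : ℕ}

local notation "𝒱" => (Fin q × Fin (p + 1)) ⊕ Option (Fin c × Fin p)

@[simp] theorem adj_inl_inl {a b : Fin q × Fin (p + 1)} :
    (disjointCliquesPlusCluster q c p).Adj (.inl a) (.inl b) ↔ a ≠ b ∧ a.1 = b.1 := by
  simp [disjointCliquesPlusCluster, eq_comm]

@[simp] theorem adj_inr_inr {a b : Option (Fin c × Fin p)} :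
    (disjointCliquesPlusCluster q c p).Adj (.inr a) (.inr b) ↔
      a ≠ b ∧ (a = none ∨ b = none ∨ a.map Prod.fst = b.map Prod.fst) := by
  simp only [disjointCliquesPlusCluster, fromRel_adj]
  grind

@[simp] theorem not_adj_inl_inr {a : Fin q × Fin (p + 1)} {b : Option (Fin c × Fin p)} :
    ¬(disjointCliquesPlusCluster q c p).Adj (.inl a) (.inr b) := by
  simp [disjointCliquesPlusCluster]

@[simp] theorem not_adj_inr_inl {a : Fin q × Fin (p + 1)} {b : Option (Fin c × Fin p)} :
    ¬(disjointCliquesPlusCluster q c p).Adj (.inr b) (.inl a) := by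
  simp [disjointCliquesPlusCluster]

def part : 𝒱 → Option (Fin q ⊕ Fin c)
  | .inl a => some (.inl a.1)
  | .inr none => none
  | .inr (some a) => some (.inr a.1)

def piece (a : Fin q) : Finset 𝒱 :=
  univ.image fun j => .inl (a, j)

def petal (i : Fin c) : Finset 𝒱 :=
  insert (.inr none) (univ.image fun j => .inr (some (i, j)))

theorem card_piece (a : Fin q) : #(piece (c := c) (p := p) a) = p + 1 := by
  rw [piece, card_image_of_injective _ fun j j' h => by simpa using h]
  simp

theorem card_petal (i : Fin c) : #(petal (q := q) (p := p) i) = p + 1 := by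
  rw [petal, card_insert_of_notMem (by simp),
    card_image_of_injective _ fun j j' h => by simpa using h]
  simp

theorem isClique_piece (a : Fin q) :
    (disjointCliquesPlusCluster q c p).IsClique (piece (c := c) (p := p) a) := by
  intro x hx y hy hxy
  simp only [piece, coe_image, coe_univ, Set.image_univ, Set.mem_range] at hx hy
  obtain ⟨j, rfl⟩ := hx
  obtain ⟨j', rfl⟩ := hy
  simpa using hxy

theorem isClique_petal (i : Fin c) :
    (disjointCliquesPlusCluster q c p).IsClique (petal (q := q) (p := p) i) := by
  intro x hx y hy hxy
  simp only [petal, coe_insert, coe_image, coe_univ, Set.image_univ, Set.mem_insert_iff,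
    Set.mem_range] at hx hy
  rcases hx with rfl | ⟨j, rfl⟩ <;> rcases hy with rfl | ⟨j', rfl⟩ <;> simp_all

theorem part_eq_of_adj {u v : 𝒱} (h : (disjointCliquesPlusCluster q c p).Adj u v)
    (hu : u ≠ .inr none) (hv : v ≠ .inr none) : part u = part v := by
  rcases u with a | _ | a <;> rcases v with b | _ | b <;> simp_all [part]

theorem card_filter_part_le (i : Option (Fin q ⊕ Fin c)) :
    #{x | part (p := p) x = i} ≤ p + 1 := by
  rcases i with _ | a | i
  · refine (card_le_card (t := {.inr none}) fun x hx => ?_).trans (by simp)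
    rw [mem_filter] at hx
    rcases x with _ | _ | _ <;> simp_all [part]
  · refine (card_le_card (t := piece a) fun x hx => ?_).trans (card_piece a).le
    rw [mem_filter] at hx
    rcases x with ⟨_, j⟩ | _ | _ <;> simp_all [part, piece]
  · refine (card_le_card (t := petal i) fun x hx => ?_).trans (card_petal i).le
    rw [mem_filter] at hx
    rcases x with _ | _ | ⟨_, j⟩ <;> simp_all [part, petal]

theorem card_insert_filter_part_le {y : 𝒱}
    (hy : (disjointCliquesPlusCluster q c p).Adj (.inr none) y) :
    #(insert (.inr none) ({x | part x = part y} : Finset 𝒱)) ≤ p + 1 := by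
  rcases y with _ | _ | ⟨i, j⟩
  · simp at hy
  · simp at hy
  refine (card_le_card (t := petal i) fun x hx => ?_).trans (card_petal i).le
  rw [mem_insert, mem_filter] at hx
  rcases x with _ | _ | ⟨_, j⟩ <;> simp_all [part, petal]

theorem le_degree [DecidableRel (disjointCliquesPlusCluster q c p).Adj] (hc : 0 < c) (u : 𝒱) :
    p ≤ (disjointCliquesPlusCluster q c p).degree u := by
  suffices ∃ s : Finset 𝒱,
      (disjointCliquesPlusCluster q c p).IsClique (s : Set 𝒱) ∧ u ∈ s ∧ #s = p + 1 by
    obtain ⟨s, hs, hu, hcard⟩ := this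
    have := hs.card_le_degree_add_one hu
    omega
  rcases u with ⟨a, j⟩ | _ | ⟨i, j⟩
  · exact ⟨piece a, isClique_piece a, by simp [piece], card_piece a⟩
  · exact ⟨petal ⟨0, hc⟩, isClique_petal _, by simp [petal], card_petal _⟩
  · exact ⟨petal i, isClique_petal i, by simp [petal], card_petal i⟩

theorem eq_hub_of_adj_of_adj {u v x : 𝒱} (huv : u ≠ v)
    (hnadj : ¬(disjointCliquesPlusCluster q c p).Adj u v)
    (hux : (disjointCliquesPlusCluster q c p).Adj u x)
    (hvx : (disjointCliquesPlusCluster q c p).Adj v x) : x = .inr none := by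
  rcases x with ⟨_, _⟩ | _ | ⟨_, _⟩ <;> rcases u with ⟨_, _⟩ | _ | ⟨_, _⟩ <;>
    rcases v with ⟨_, _⟩ | _ | ⟨_, _⟩ <;> simp_all [Prod.ext_iff]

theorem not_hasCycleLen {m : ℕ} (hm : p + 2 ≤ m) :
    ¬HasCycleLen (disjointCliquesPlusCluster q c p) m := by
  classical
  rintro ⟨v, w, hw, rfl⟩
  have := hw.length_le_of_card_fiber_le (fun u v h => part_eq_of_adj h) card_filter_part_le
    fun y => card_insert_filter_part_le
  omega

theorem not_hasBook_compl {n : ℕ} (hc : 0 < c) (hn : Fintype.card 𝒱 ≤ n + 3 * p) :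
    ¬HasBook (disjointCliquesPlusCluster q c p)ᶜ 3 n := by
  classical
  intro h
  have := le_card_of_hasBook_compl (le_degree hc) (fun u v huv hnadj x hx => by
    simp only [mem_inter, mem_neighborFinset] at hx
    simpa using eq_hub_of_adj_of_adj huv hnadj hx.1 hx.2) h
  omega

end disjointCliquesPlusCluster

theorem stmt9_general (t m n p : ℕ)
    (hm : 4 * (t + 3) + 2 ≤ m)
    (hp : p = (n - 1) / t) (hpm : p = m - 2) :
    (¬ HasCycleLen
        (disjointCliquesPlusCluster (n - 1 - t * p) (t + 3 - (n - 1 - t * p)) p) m ∧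
      ¬ HasBook
        (disjointCliquesPlusCluster (n - 1 - t * p) (t + 3 - (n - 1 - t * p)) p)ᶜ 3 n) ∧
    ∀ N : ℕ, RamseyProp m 3 n N → n + 3 * p + 1 ≤ N := by
  have ht : 0 < t := Nat.pos_of_ne_zero fun h => by simp [h] at hp; omega
  have hdiv := Nat.div_add_mod (n - 1) t
  rw [← hp] at hdiv
  have hn : 1 ≤ n := by have := Nat.le_mul_of_pos_left p ht; omega
  have hqt : n - 1 - t * p < t := by have := Nat.mod_lt (n - 1) ht; omega
  have hcard : Fintype.card ((Fin (n - 1 - t * p) × Fin (p + 1)) ⊕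
      Option (Fin (t + 3 - (n - 1 - t * p)) × Fin p)) = n + 3 * p := by
    simp only [Fintype.card_sum, Fintype.card_prod, Fintype.card_option, Fintype.card_fin]
    obtain ⟨c, hc⟩ : ∃ c, t + 3 - (n - 1 - t * p) = c + 3 :=
      ⟨t - (n - 1 - t * p), by omega⟩
    have : t * p = (n - 1 - t * p + c) * p := by rw [show n - 1 - t * p + c = t by omega]
    rw [hc]
    zify [hn, (by omega : t * p ≤ n - 1)] at this ⊢
    linear_combination -this
  have hcycle := disjointCliquesPlusCluster.not_hasCycleLen (q := n - 1 - t * p)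
    (c := t + 3 - (n - 1 - t * p)) (by omega : p + 2 ≤ m)
  have hbook := disjointCliquesPlusCluster.not_hasBook_compl (by omega) hcard.le
  exact ⟨⟨hcycle, hbook⟩, fun N hN => hcard ▸ card_lt_of_ramseyProp hcycle hbook hN⟩

theorem stmt9 (t m n p : ℕ) (ht : 2 ≤ t) (hmEven : Even m)
    (hm : 4 * (t + 3) + 2 ≤ m)
    (hn1 : (t - 1) * (m - 1) ≤ n - 1) (hn2 : n - 1 < t * (m - 1))
    (hp : p = (n - 1) / t) (hpm : p = m - 2) :
    (¬ HasCycleLen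
        (disjointCliquesPlusCluster (n - 1 - t * p) (t + 3 - (n - 1 - t * p)) p) m ∧
      ¬ HasBook
        (disjointCliquesPlusCluster (n - 1 - t * p) (t + 3 - (n - 1 - t * p)) p)ᶜ 3 n) ∧
    ∀ N : ℕ, RamseyProp m 3 n N → n + 3 * p + 1 ≤ N :=
  stmt9_general t m n p hm hp hpm
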